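/- arXiv:1404.6732 — 6 statements merged into one kernel-verified Lean document; each statement's English description precedes it below -/
import Mathlib

section
/- Let f : I → (0,∞) be continuous on a subinterval I of (0,∞). If f is increasing and log-convex, then for all distinct x, y ∈ I, the logarithmic mean satisfies L(f(x), f(y)) ≥ f(L(x, y)). -/
/-!
The logarithmic mean lies between the geometric and the arithmetic mean. Hence
`f (L x y) ≤ f ((x + y) / 2)` by monotonicity, log-convexity bounds this by the geometric mean
`√(f x * f y)`, and that is at most `L (f x) (f y)`.
-/

noncomputable def logMean (a b : ℝ) : ℝ := (a - b) / (Real.log a - Real.log b)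

open Real

lemma logMean_comm (a b : ℝ) : logMean a b = logMean b a := by
  rw [logMean, logMean, ← neg_sub b, ← neg_sub (log b), neg_div_neg_eq]

/-- With `s = √(a / b)`, this is `u ≤ sinh u` for `u = log s`. -/
lemma sqrt_mul_mul_log_sub_log_le {a b : ℝ} (hb : 0 < b) (hba : b ≤ a) :
    √(a * b) * (log a - log b) ≤ a - b := by
  have ha : 0 < a := hb.trans_le hba
  set s := √a / √b with hs
  have hs0 : 0 < s := by positivity
  have hlog : log a - log b = 2 * log s := by
    rw [log_div (by positivity) (by positivity), log_sqrt ha.le, log_sqrt hb.le]; ring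
  have hsinh : log s ≤ (s - s⁻¹) / 2 := by
    rw [← sinh_log hs0, self_le_sinh_iff]
    exact log_nonneg ((one_le_div (by positivity)).mpr (sqrt_le_sqrt hba))
  have hab : √(a * b) * (s - s⁻¹) = a - b := by
    rw [hs, sqrt_mul ha.le]
    field_simp
    rw [sq_sqrt ha.le, sq_sqrt hb.le]
  nlinarith [sqrt_nonneg (a * b)]

/-- With `x = (a - b) / (a + b)`, this is `x ≤ artanh x`, the first term of the series of
`artanh x = log ((1 + x) / (1 - x)) / 2`. -/
lemma two_mul_sub_le_add_mul_log_sub_log {a b : ℝ} (hb : 0 < b) (hba : b ≤ a) :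
    2 * (a - b) ≤ (a + b) * (log a - log b) := by
  have ha : 0 < a := hb.trans_le hba
  set x := (a - b) / (a + b) with hx
  have hx0 : 0 ≤ x := div_nonneg (by linarith) (by linarith)
  have hx1 : x < 1 := (div_lt_one (by linarith)).mpr (by linarith)
  have h := sum_range_le_log_div hx0 hx1 1
  have hratio : (1 + x) / (1 - x) = a / b := by
    rw [div_eq_div_iff (by linarith) hb.ne', hx]
    field_simp
    ring
  rw [hratio, log_div ha.ne' hb.ne'] at h
  simp only [Finset.sum_range_one] at h
  norm_num at h
  rw [hx, div_le_iff₀ (by linarith)] at h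
  linarith

lemma sqrt_mul_le_logMean {a b : ℝ} (ha : 0 < a) (hb : 0 < b) (hab : a ≠ b) :
    √(a * b) ≤ logMean a b := by
  wlog hba : b < a generalizing a b
  · rw [logMean_comm, mul_comm]
    exact this hb ha hab.symm (hab.lt_or_gt.resolve_right hba)
  rw [logMean, le_div_iff₀ (sub_pos.mpr (log_lt_log hb hba))]
  exact sqrt_mul_mul_log_sub_log_le hb hba.le

lemma logMean_le_add_div_two {a b : ℝ} (ha : 0 < a) (hb : 0 < b) (hab : a ≠ b) :
    logMean a b ≤ (a + b) / 2 := by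
  wlog hba : b < a generalizing a b
  · rw [logMean_comm, add_comm]
    exact this hb ha hab.symm (hab.lt_or_gt.resolve_right hba)
  rw [logMean, div_le_div_iff₀ (sub_pos.mpr (log_lt_log hb hba)) two_pos]
  linarith [two_mul_sub_le_add_mul_log_sub_log hb hba.le]

lemma left_le_logMean {a b : ℝ} (ha : 0 < a) (hab : a < b) : a ≤ logMean a b :=
  calc a = √(a * a) := (sqrt_mul_self ha.le).symm
    _ ≤ √(a * b) := sqrt_le_sqrt (mul_le_mul_of_nonneg_left hab.le ha.le)
    _ ≤ logMean a b := sqrt_mul_le_logMean ha (ha.trans hab) hab.ne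

lemma ConvexOn.apply_midpoint_le_sqrt_mul {s : Set ℝ} {g : ℝ → ℝ}
    (hg : ConvexOn ℝ s fun x => log (g x)) (hpos : ∀ x ∈ s, 0 < g x)
    {x y : ℝ} (hx : x ∈ s) (hy : y ∈ s) : g ((x + y) / 2) ≤ √(g x * g y) := by
  have hhalf : (0 : ℝ) ≤ 1 / 2 := by norm_num
  have hcomb : (1 / 2 : ℝ) • x + (1 / 2 : ℝ) • y = (x + y) / 2 := by
    simp only [smul_eq_mul]; ring
  have hmid : (x + y) / 2 ∈ s := hcomb ▸ hg.1 hx hy hhalf hhalf (by norm_num)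
  have hlog := hg.2 hx hy hhalf hhalf (by norm_num)
  rw [hcomb, smul_eq_mul, smul_eq_mul] at hlog
  have hgx := hpos x hx
  have hgy := hpos y hy
  have hgm := hpos _ hmid
  refine le_sqrt_of_sq_le ?_
  rw [← log_le_log_iff (by positivity) (by positivity), log_pow, log_mul hgx.ne' hgy.ne']
  push_cast
  linarith

theorem stmt0_general (I : Set ℝ) (hI : I ⊆ Set.Ioi 0) (hIc : Convex ℝ I)
    (f : ℝ → ℝ) (hpos : ∀ x ∈ I, 0 < f x)
    (hmono : StrictMonoOn f I) (hconv : ConvexOn ℝ I (fun x => Real.log (f x)))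
    (x y : ℝ) (hx : x ∈ I) (hy : y ∈ I) (hxy : x ≠ y) :
    logMean (f x) (f y) ≥ f (logMean x y) := by
  wlog hlt : x < y generalizing x y
  · rw [ge_iff_le, logMean_comm x, logMean_comm (f x)]
    exact this y x hy hx hxy.symm (hxy.lt_or_gt.resolve_left hlt)
  have hx0 : 0 < x := hI hx
  have hL_le : logMean x y ≤ (x + y) / 2 := logMean_le_add_div_two hx0 (hI hy) hxy
  have hIcc : Set.Icc x y ⊆ I := hIc.ordConnected.out hx hy
  calc f (logMean x y) ≤ f ((x + y) / 2) :=
        hmono.monotoneOn (hIcc ⟨left_le_logMean hx0 hlt, by linarith⟩)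
          (hIcc ⟨by linarith, by linarith⟩) hL_le
    _ ≤ √(f x * f y) := hconv.apply_midpoint_le_sqrt_mul hpos hx hy
    _ ≤ logMean (f x) (f y) :=
        sqrt_mul_le_logMean (hpos x hx) (hpos y hy) (hmono.injOn.ne hx hy hxy)

theorem stmt0 (I : Set ℝ) (hI : I ⊆ Set.Ioi 0) (hIc : Convex ℝ I)
    (f : ℝ → ℝ) (hcont : ContinuousOn f I) (hpos : ∀ x ∈ I, 0 < f x)
    (hmono : StrictMonoOn f I) (hconv : ConvexOn ℝ I (fun x => Real.log (f x)))
    (x y : ℝ) (hx : x ∈ I) (hy : y ∈ I) (hxy : x ≠ y) :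
    logMean (f x) (f y) ≥ f (logMean x y) :=
  stmt0_general I hI hIc f hpos hmono hconv x y hx hy hxy
end

section
/- Let f : I → (0,∞) be continuous on a subinterval I of (0,∞). If f is increasing and log-convex, then for all distinct x, y ∈ I, L(f(x), f(y)) ≥ f((x+y)/2), where L is the logarithmic mean. -/
open Real

/-! The midpoint form of log-convexity gives `f ((x + y) / 2) ≤ exp ((log f x + log f y) / 2)`,
the geometric mean of `f x` and `f y`, and the geometric mean is bounded by the logarithmic mean.
In logarithmic coordinates the latter says that the chord slope `(exp p - exp q) / (p - q)`
dominates `exp ((p + q) / 2)`, which after factoring out `exp ((p + q) / 2)` is `t ≤ sinh t`. -/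

lemma ConvexOn.map_add_div_two_le {s : Set ℝ} {g : ℝ → ℝ} (hg : ConvexOn ℝ s g) {x y : ℝ}
    (hx : x ∈ s) (hy : y ∈ s) : g ((x + y) / 2) ≤ (g x + g y) / 2 := by
  have h := hg.2 hx hy (by norm_num : (0 : ℝ) ≤ 1 / 2) (by norm_num : (0 : ℝ) ≤ 1 / 2)
    (by norm_num)
  simp only [smul_eq_mul] at h
  rw [show (x + y) / 2 = 1 / 2 * x + 1 / 2 * y by ring]
  linarith

lemma sub_mul_exp_add_div_two_le_exp_sub_exp {p q : ℝ} (hqp : q < p) :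
    (p - q) * exp ((p + q) / 2) ≤ exp p - exp q := by
  have hsinh : (p - q) / 2 ≤ sinh ((p - q) / 2) :=
    (self_lt_sinh_iff.2 (by linarith)).le
  have hp : exp p = exp ((p - q) / 2) * exp ((p + q) / 2) := by rw [← exp_add]; ring_nf
  have hq : exp q = exp (-((p - q) / 2)) * exp ((p + q) / 2) := by rw [← exp_add]; ring_nf
  rw [hp, hq, ← sub_mul]
  rw [sinh_eq] at hsinh
  nlinarith [exp_pos ((p + q) / 2)]

lemma exp_add_div_two_le_div_sub {p q : ℝ} (hpq : p ≠ q) :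
    exp ((p + q) / 2) ≤ (exp p - exp q) / (p - q) := by
  rcases hpq.lt_or_gt with h | h
  · rw [← neg_div_neg_eq (exp p - exp q), neg_sub, neg_sub, add_comm p q,
      le_div_iff₀ (by linarith), mul_comm]
    exact sub_mul_exp_add_div_two_le_exp_sub_exp h
  · rw [le_div_iff₀ (by linarith), mul_comm]
    exact sub_mul_exp_add_div_two_le_exp_sub_exp h

lemma exp_add_log_div_two_le_logMean {a b : ℝ} (ha : 0 < a) (hb : 0 < b) (hab : a ≠ b) :
    exp ((log a + log b) / 2) ≤ logMean a b := by
  have hlog : log a ≠ log b := fun h => hab (log_injOn_pos ha hb h)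
  simpa only [logMean, exp_log ha, exp_log hb] using exp_add_div_two_le_div_sub hlog

theorem stmt1_general (I : Set ℝ)
    (f : ℝ → ℝ) (hpos : ∀ x ∈ I, 0 < f x)
    (hmono : StrictMonoOn f I) (hconv : ConvexOn ℝ I (fun x => Real.log (f x)))
    (x y : ℝ) (hx : x ∈ I) (hy : y ∈ I) (hxy : x ≠ y) :
    logMean (f x) (f y) ≥ f ((x + y) / 2) := by
  have hmid : (x + y) / 2 ∈ I := by
    convert hconv.1.midpoint_mem hx hy using 1
    rw [midpoint_eq_smul_add, smul_eq_mul, invOf_eq_inv]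
    ring
  have hfne : f x ≠ f y := fun h => hxy (hmono.injOn hx hy h)
  calc f ((x + y) / 2)
      = exp (log (f ((x + y) / 2))) := (exp_log (hpos _ hmid)).symm
    _ ≤ exp ((log (f x) + log (f y)) / 2) := exp_le_exp.2 (hconv.map_add_div_two_le hx hy)
    _ ≤ logMean (f x) (f y) := exp_add_log_div_two_le_logMean (hpos x hx) (hpos y hy) hfne

theorem stmt1 (I : Set ℝ) (hI : I ⊆ Set.Ioi 0) (hIc : Convex ℝ I)
    (f : ℝ → ℝ) (hcont : ContinuousOn f I) (hpos : ∀ x ∈ I, 0 < f x)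
    (hmono : StrictMonoOn f I) (hconv : ConvexOn ℝ I (fun x => Real.log (f x)))
    (x y : ℝ) (hx : x ∈ I) (hy : y ∈ I) (hxy : x ≠ y) :
    logMean (f x) (f y) ≥ f ((x + y) / 2) :=
  stmt1_general I f hpos hmono hconv x y hx hy hxy
end

section
/- For distinct positive reals a and b, the logarithmic mean is strictly less than the arithmetic mean: (a - b)/(log a - log b) < (a + b)/2. -/
open Real

lemma two_mul_lt_log_one_add_sub_log_one_sub {x : ℝ} (hx₀ : 0 < x) (hx₁ : x < 1) :
    2 * x < log (1 + x) - log (1 - x) := by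
  have hsum := hasSum_log_sub_log_of_abs_lt_one (abs_lt.2 ⟨by linarith, hx₁⟩)
  have hle := sum_le_hasSum (Finset.range 2) (fun k _ => by positivity) hsum
  norm_num [Finset.sum_range_succ] at hle
  nlinarith [pow_pos hx₀ 3]

lemma two_mul_sub_div_add_lt_log_sub_log {a b : ℝ} (hb : 0 < b) (hba : b < a) :
    2 * (a - b) / (a + b) < log a - log b := by
  set x := (a - b) / (a + b)
  have hab : 0 < a + b := by linarith
  have hx₀ : 0 < x := div_pos (by linarith) hab
  have hx₁ : x < 1 := (div_lt_one hab).2 (by linarith)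
  have hlog : log (1 + x) - log (1 - x) = log a - log b := by
    have h₁ : 1 + x = 2 / (a + b) * a := by simp only [x]; field_simp; ring
    have h₂ : 1 - x = 2 / (a + b) * b := by simp only [x]; field_simp; ring
    rw [h₁, h₂, log_mul (by positivity) (by linarith), log_mul (by positivity) hb.ne']
    ring
  rw [mul_div_assoc, ← hlog]
  exact two_mul_lt_log_one_add_sub_log_one_sub hx₀ hx₁

lemma logMean_lt_add_div_two_of_lt {a b : ℝ} (hb : 0 < b) (hba : b < a) :
    logMean a b < (a + b) / 2 := by
  have hab : 0 < a + b := by linarith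
  have hlt := two_mul_sub_div_add_lt_log_sub_log hb hba
  have hlog : 0 < log a - log b := (div_pos (by linarith) hab).trans hlt
  rw [logMean, div_lt_div_iff₀ hlog two_pos]
  rw [div_lt_iff₀ hab] at hlt
  linarith

theorem stmt5 (a b : ℝ) (ha : 0 < a) (hb : 0 < b) (hab : a ≠ b) :
    logMean a b < (a + b) / 2 := by
  rcases hab.lt_or_gt with hlt | hgt
  · rw [logMean_comm, add_comm]
    exact logMean_lt_add_div_two_of_lt ha hlt
  · exact logMean_lt_add_div_two_of_lt hb hgt
end

section
/- For distinct x, y ∈ (0, π/2), the logarithmic mean of sin x and sin y satisfies L(sin x, sin y) ≤ sin(L(x, y)). -/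
/-!
Write `L(a, b) = ∫₀¹ b^(1-l) a^l dl`. The function `u ↦ log (sin (exp u))` is concave for
`exp u < π`: with `v = exp u` its second derivative is `v (sin v cos v - v) / sin² v ≤ 0`, as
`sin 2v ≤ 2v`. Hence `(sin y)^(1-l) (sin x)^l ≤ sin (y^(1-l) x^l)`; integrating over `l` and
then applying Jensen's inequality to the concave function `sin` on `[0, π]` gives
`L(sin x, sin y) ≤ ∫₀¹ sin (y^(1-l) x^l) dl ≤ sin (L(x, y))`.
-/

open Real Set MeasureTheory intervalIntegral

-- `geomPath a b l = b ^ (1 - l) * a ^ l`, written via `exp` and `log` to integrate it directly.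
noncomputable def geomPath (a b l : ℝ) : ℝ := exp ((log a - log b) * l + log b)

@[fun_prop]
lemma continuous_geomPath (a b : ℝ) : Continuous (geomPath a b) := by
  unfold geomPath; fun_prop

lemma geomPath_lt {a b c l : ℝ} (ha : 0 < a) (hb : 0 < b) (hac : a < c) (hbc : b < c)
    (hl : l ∈ Icc (0 : ℝ) 1) : geomPath a b l < c := by
  have hmem := convex_Iio (log c) (log_lt_log hb hbc) (log_lt_log ha hac)
    (sub_nonneg.2 hl.2) hl.1 (sub_add_cancel 1 l)
  rw [geomPath, ← exp_log (ha.trans hac), exp_lt_exp]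
  simp only [smul_eq_mul, mem_Iio] at hmem
  linarith

lemma logMean_eq_integral_geomPath {a b : ℝ} (ha : 0 < a) (hb : 0 < b) (hab : a ≠ b) :
    logMean a b = ∫ l in (0 : ℝ)..1, geomPath a b l := by
  have hlog : log a - log b ≠ 0 := sub_ne_zero.2 fun h => hab (log_injOn_pos ha hb h)
  simp only [geomPath]
  rw [integral_comp_mul_add (fun u => exp u) hlog, integral_exp, logMean]
  simp [exp_log ha, exp_log hb, div_eq_inv_mul]

lemma sin_mul_cos_le {v : ℝ} (hv : 0 ≤ v) : sin v * cos v ≤ v := by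
  have : sin (2 * v) ≤ 2 * v := sin_le (by positivity)
  rw [sin_two_mul] at this
  linarith

lemma concaveOn_log_sin_exp : ConcaveOn ℝ (Iio (log π)) fun u => log (sin (exp u)) := by
  have hsin : ∀ u ∈ Iio (log π), 0 < sin (exp u) := fun u hu =>
    sin_pos_of_pos_of_lt_pi (exp_pos u) (by simpa [exp_log pi_pos] using exp_lt_exp.2 hu)
  have hcont : ContinuousOn (fun u => log (sin (exp u))) (Iio (log π)) := fun u hu =>
    (ContinuousAt.log (f := fun u => sin (exp u)) (by fun_prop) (hsin u hu).ne').continuousWithinAt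
  refine concaveOn_of_hasDerivWithinAt2_nonpos (convex_Iio _) hcont
    (f' := fun u => exp u * cos (exp u) / sin (exp u))
    (f'' := fun u => exp u * (sin (exp u) * cos (exp u) - exp u) / sin (exp u) ^ 2) ?_ ?_ ?_
  all_goals simp only [interior_Iio]
  · intro u hu
    have := (hasDerivAt_exp u).sin.log (hsin u hu).ne'
    exact (this.congr_deriv (by ring)).hasDerivWithinAt
  · intro u hu
    have hnum : HasDerivAt (fun u => exp u * cos (exp u)) _ u :=
      (hasDerivAt_exp u).mul (hasDerivAt_exp u).cos
    have := hnum.div (hasDerivAt_exp u).sin (hsin u hu).ne'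
    refine (this.congr_deriv ?_).hasDerivWithinAt
    linear_combination -(exp u) ^ 2 * (sin_sq_add_cos_sq (exp u)) / sin (exp u) ^ 2
  · intro u _
    exact div_nonpos_of_nonpos_of_nonneg
      (mul_nonpos_of_nonneg_of_nonpos (exp_pos u).le
        (sub_nonpos.2 (sin_mul_cos_le (exp_pos u).le))) (sq_nonneg _)

lemma geomPath_sin_le_sin_geomPath {x y l : ℝ} (hx : x ∈ Ioo 0 π) (hy : y ∈ Ioo 0 π)
    (hl : l ∈ Icc (0 : ℝ) 1) : geomPath (sin x) (sin y) l ≤ sin (geomPath x y l) := by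
  have hconc := concaveOn_log_sin_exp.2 (log_lt_log hy.1 hy.2) (log_lt_log hx.1 hx.2)
    (sub_nonneg.2 hl.2) hl.1 (sub_add_cancel 1 l)
  simp only [smul_eq_mul, exp_log hx.1, exp_log hy.1] at hconc
  have hsin : 0 < sin (geomPath x y l) := sin_pos_of_pos_of_lt_pi (exp_pos _)
    (geomPath_lt hx.1 hy.1 hx.2 hy.2 hl)
  calc geomPath (sin x) (sin y) l = exp ((1 - l) * log (sin y) + l * log (sin x)) := by
        rw [geomPath]; ring_nf
    _ ≤ exp (log (sin (geomPath x y l))) := by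
        rw [geomPath]; convert exp_le_exp.2 hconc using 5; ring
    _ = sin (geomPath x y l) := exp_log hsin

lemma ConcaveOn.le_map_intervalIntegral_zero_one {s : Set ℝ} {g f : ℝ → ℝ}
    (hg : ConcaveOn ℝ s g) (hgc : ContinuousOn g s) (hs : IsClosed s)
    (hf : ContinuousOn f (Icc 0 1)) (hfs : MapsTo f (Icc 0 1) s) :
    ∫ l in (0 : ℝ)..1, g (f l) ≤ g (∫ l in (0 : ℝ)..1, f l) := by
  have := hg.le_map_set_average hgc hs (μ := volume) (t := Ioc 0 1) (by simp) (by simp)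
    (ae_restrict_of_forall_mem measurableSet_Ioc fun l hl => hfs (Ioc_subset_Icc_self hl))
    (hf.integrableOn_Icc.mono_set Ioc_subset_Icc_self)
    ((hgc.comp hf hfs).integrableOn_Icc.mono_set Ioc_subset_Icc_self)
  simpa [setAverage_eq, integral_of_le zero_le_one] using this

theorem logMean_sin_le_sin_logMean {x y : ℝ} (hx : x ∈ Ioo 0 π) (hy : y ∈ Ioo 0 π)
    (hxy : x ≠ y) : logMean (sin x) (sin y) ≤ sin (logMean x y) := by
  have hpath : MapsTo (geomPath x y) (Icc 0 1) (Icc 0 π) := fun l hl =>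
    ⟨(exp_pos _).le, (geomPath_lt hx.1 hy.1 hx.2 hy.2 hl).le⟩
  have hjensen : ∫ l in (0 : ℝ)..1, sin (geomPath x y l) ≤ sin (logMean x y) := by
    rw [logMean_eq_integral_geomPath hx.1 hy.1 hxy]
    exact strictConcaveOn_sin_Icc.concaveOn.le_map_intervalIntegral_zero_one
      continuous_sin.continuousOn isClosed_Icc (by fun_prop) hpath
  refine le_trans ?_ hjensen
  by_cases hs : sin x = sin y
  · -- `logMean` of equal arguments is the junk value `0 / 0 = 0`.
    rw [logMean, hs, sub_self, zero_div]
    exact integral_nonneg zero_le_one fun l hl =>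
      sin_nonneg_of_nonneg_of_le_pi (hpath hl).1 (hpath hl).2
  · rw [logMean_eq_integral_geomPath (sin_pos_of_pos_of_lt_pi hx.1 hx.2)
      (sin_pos_of_pos_of_lt_pi hy.1 hy.2) hs]
    exact integral_mono_on zero_le_one
      ((continuous_geomPath _ _).intervalIntegrable 0 1)
      ((continuous_sin.comp (continuous_geomPath x y)).intervalIntegrable 0 1) fun l hl =>
      geomPath_sin_le_sin_geomPath hx hy hl

theorem stmt6 (x y : ℝ) (hx : x ∈ Set.Ioo 0 (π / 2)) (hy : y ∈ Set.Ioo 0 (π / 2))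
    (hxy : x ≠ y) :
    logMean (Real.sin x) (Real.sin y) ≤ Real.sin (logMean x y) := by
  have hsub : Ioo 0 (π / 2) ⊆ Ioo 0 π := Ioo_subset_Ioo_right (half_le_self pi_pos.le)
  exact logMean_sin_le_sin_logMean (hsub hx) (hsub hy) hxy
end

section
/- The function sin is HH-concave on (0, π/2): for all distinct x, y ∈ (0, π/2), sin(H(x,y)) ≥ H(sin x, sin y), where H(a,b) = 2ab/(a+b) is the harmonic mean. -/
open Real Set

def HHConcaveOn (f : ℝ → ℝ) (I : Set ℝ) : Prop :=
  ∀ ⦃x⦄, x ∈ I → ∀ ⦃y⦄, y ∈ I → 2 * (f x * f y) / (f x + f y) ≤ f (2 * x * y / (x + y))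

theorem HHConcaveOn.of_convexOn_inv_comp_inv {f : ℝ → ℝ} {I : Set ℝ} (hI : I ⊆ Ioi 0)
    (hf : ∀ x ∈ I, 0 < f x) (hconv : ConvexOn ℝ I⁻¹ fun u ↦ (f u⁻¹)⁻¹) : HHConcaveOn f I := by
  intro x hx y hy
  have hx0 : 0 < x := hI hx
  have hy0 : 0 < y := hI hy
  have hhalf : (0 : ℝ) ≤ 2⁻¹ := by norm_num
  have hmid : (2⁻¹ * x⁻¹ + 2⁻¹ * y⁻¹)⁻¹ = 2 * x * y / (x + y) := by
    field_simp; ring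
  have hmem : 2⁻¹ * x⁻¹ + 2⁻¹ * y⁻¹ ∈ I⁻¹ :=
    hconv.1 (inv_mem_inv.2 hx) (inv_mem_inv.2 hy) hhalf hhalf (by norm_num)
  have hjensen := hconv.2 (inv_mem_inv.2 hx) (inv_mem_inv.2 hy) hhalf hhalf (by norm_num)
  simp only [smul_eq_mul, inv_inv, hmid] at hjensen
  rw [mem_inv, hmid] at hmem
  have hfx := hf x hx
  have hfy := hf y hy
  calc 2 * (f x * f y) / (f x + f y) = (2⁻¹ * (f x)⁻¹ + 2⁻¹ * (f y)⁻¹)⁻¹ := by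
        field_simp; ring
    _ ≤ f (2 * x * y / (x + y)) := inv_le_of_inv_le₀ (hf _ hmem) hjensen

theorem sin_two_mul_le_mul_one_add_cos_sq {t : ℝ} (ht : 0 ≤ t) :
    sin (2 * t) ≤ t * (1 + cos t ^ 2) := by
  have hsin : |sin t| ≤ t := (abs_sin_le_abs).trans (abs_of_nonneg ht).le
  calc sin (2 * t) = 2 * sin t * cos t := sin_two_mul t
    _ ≤ 2 * |sin t| * |cos t| := by
        rw [mul_assoc, mul_assoc, ← abs_mul]; linarith [le_abs_self (sin t * cos t)]
    _ ≤ 2 * t * |cos t| := by gcongr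
    _ ≤ t * (1 + cos t ^ 2) := by nlinarith [sq_nonneg (|cos t| - 1), sq_abs (cos t)]

theorem hasDerivAt_inv_sin_inv {u : ℝ} (hu : u ≠ 0) (hsin : sin u⁻¹ ≠ 0) :
    HasDerivAt (fun u ↦ (sin u⁻¹)⁻¹) (cos u⁻¹ / (u * sin u⁻¹) ^ 2) u := by
  refine (((hasDerivAt_sin u⁻¹).comp u (hasDerivAt_inv hu)).inv hsin).congr_deriv ?_
  simp only [Function.comp_apply]
  field_simp

theorem hasDerivAt_cos_inv_div_sq {u : ℝ} (hu : u ≠ 0) (hsin : sin u⁻¹ ≠ 0) :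
    HasDerivAt (fun u ↦ cos u⁻¹ / (u * sin u⁻¹) ^ 2)
      (sin u⁻¹ * (1 + cos u⁻¹ ^ 2 - u * sin (2 * u⁻¹)) / (u * sin u⁻¹) ^ 4) u := by
  have hinv := hasDerivAt_inv hu
  have hden := ((hasDerivAt_id u).mul ((hasDerivAt_sin u⁻¹).comp u hinv)).pow 2
  refine (((hasDerivAt_cos u⁻¹).comp u hinv).div hden (by simp [hu, hsin])).congr_deriv ?_
  simp only [Function.comp_apply, Pi.mul_apply, Pi.pow_apply, id, sin_two_mul]
  have hpyth := sin_sq_add_cos_sq u⁻¹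
  generalize sin u⁻¹ = s, cos u⁻¹ = c at hsin hpyth ⊢
  field_simp
  linear_combination s * u * hpyth

theorem pos_and_sin_inv_pos_of_inv_pi_lt {u : ℝ} (hu : π⁻¹ < u) : 0 < u ∧ 0 < sin u⁻¹ := by
  have hu0 : 0 < u := (inv_pos.2 pi_pos).trans hu
  exact ⟨hu0, sin_pos_of_pos_of_lt_pi (inv_pos.2 hu0) (inv_lt_of_inv_lt₀ pi_pos hu)⟩

theorem convexOn_inv_sin_inv : ConvexOn ℝ (Ioi π⁻¹) fun u ↦ (sin u⁻¹)⁻¹ := by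
  refine convexOn_of_hasDerivWithinAt2_nonneg (convex_Ioi _)
    (f' := fun u ↦ cos u⁻¹ / (u * sin u⁻¹) ^ 2)
    (f'' := fun u ↦ sin u⁻¹ * (1 + cos u⁻¹ ^ 2 - u * sin (2 * u⁻¹)) / (u * sin u⁻¹) ^ 4)
    ?_ ?_ ?_ ?_
  · intro u hu
    obtain ⟨hu0, hsin⟩ := pos_and_sin_inv_pos_of_inv_pi_lt hu
    exact (hasDerivAt_inv_sin_inv hu0.ne' hsin.ne').continuousAt.continuousWithinAt
  all_goals rw [interior_Ioi]
  · intro u hu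
    obtain ⟨hu0, hsin⟩ := pos_and_sin_inv_pos_of_inv_pi_lt hu
    exact (hasDerivAt_inv_sin_inv hu0.ne' hsin.ne').hasDerivWithinAt
  · intro u hu
    obtain ⟨hu0, hsin⟩ := pos_and_sin_inv_pos_of_inv_pi_lt hu
    exact (hasDerivAt_cos_inv_div_sq hu0.ne' hsin.ne').hasDerivWithinAt
  · intro u hu
    obtain ⟨hu0, hsin⟩ := pos_and_sin_inv_pos_of_inv_pi_lt hu
    have hkey : u * sin (2 * u⁻¹) ≤ 1 + cos u⁻¹ ^ 2 := by
      calc u * sin (2 * u⁻¹) ≤ u * (u⁻¹ * (1 + cos u⁻¹ ^ 2)) :=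
            mul_le_mul_of_nonneg_left (sin_two_mul_le_mul_one_add_cos_sq (inv_pos.2 hu0).le) hu0.le
        _ = 1 + cos u⁻¹ ^ 2 := by field_simp
    exact div_nonneg (mul_nonneg hsin.le (sub_nonneg.2 hkey)) (by positivity)

theorem hhConcaveOn_sin : HHConcaveOn sin (Ioo 0 π) := by
  refine HHConcaveOn.of_convexOn_inv_comp_inv Ioo_subset_Ioi_self
    (fun x hx ↦ sin_pos_of_pos_of_lt_pi hx.1 hx.2) ?_
  rw [inv_Ioo_0_left pi_pos]
  exact convexOn_inv_sin_inv

theorem stmt17_general (x y : ℝ) (hx : x ∈ Set.Ioo 0 (π / 2)) (hy : y ∈ Set.Ioo 0 (π / 2)) :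
    Real.sin (2 * x * y / (x + y)) ≥
      2 * (Real.sin x * Real.sin y) / (Real.sin x + Real.sin y) :=
  hhConcaveOn_sin (Ioo_subset_Ioo_right (half_le_self pi_pos.le) hx)
    (Ioo_subset_Ioo_right (half_le_self pi_pos.le) hy)

theorem stmt17 (x y : ℝ) (hx : x ∈ Set.Ioo 0 (π / 2)) (hy : y ∈ Set.Ioo 0 (π / 2))
    (hxy : x ≠ y) :
    Real.sin (2 * x * y / (x + y)) ≥
      2 * (Real.sin x * Real.sin y) / (Real.sin x + Real.sin y) :=
  stmt17_general x y hx hy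
end

section
/- Let f : I → (0,∞) be differentiable on an open subinterval I of (0,∞). Then f is HH-convex on I if and only if x ↦ x² f'(x)/f(x)² is increasing on I. -/
/-!
The substitution `u = 1 / x` turns HH-convexity of `f` into midpoint convexity of
`g u = -1 / f (1 / u)`, because the harmonic mean of `x` and `y` is the reciprocal of the
arithmetic mean of `1 / x` and `1 / y`. By the chain rule `g' u = -x² f' x / (f x)²` at
`x = 1 / u`, and `x ↦ 1 / x` reverses order, so the claim becomes: a differentiable function is
midpoint convex iff its derivative is monotone. One direction is Mathlib's
`MonotoneOn.convexOn_of_deriv`; for the other, midpoint convexity already puts the graph above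
its tangent lines.
-/

open Filter Topology Set
open scoped Pointwise

def MidpointConvexOn (s : Set ℝ) (g : ℝ → ℝ) : Prop :=
  ∀ u ∈ s, ∀ v ∈ s, g ((u + v) / 2) ≤ (g u + g v) / 2

def HHConvexOn (I : Set ℝ) (f : ℝ → ℝ) : Prop :=
  ∀ x ∈ I, ∀ y ∈ I, f (2 * x * y / (x + y)) ≤ 2 * (f x * f y) / (f x + f y)

namespace MidpointConvexOn

variable {s : Set ℝ} {g : ℝ → ℝ}

/-- Halving the increment `h` repeatedly gives `2ⁿ (g (u + h / 2ⁿ) - g u) ≤ g (u + h) - g u`,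
and the left side tends to `g' u * h`. -/
theorem deriv_mul_le (hg : MidpointConvexOn s g) (hs : Convex ℝ s) {u h : ℝ} (hu : u ∈ s)
    (huh : u + h ∈ s) (hgu : DifferentiableAt ℝ g u) : deriv g u * h ≤ g (u + h) - g u := by
  rcases eq_or_ne h 0 with rfl | hh
  · simp
  set t : ℕ → ℝ := fun n => (2⁻¹ : ℝ) ^ n * h
  have hts : ∀ n, u + t n ∈ s := fun n =>
    hs.add_smul_mem hu huh ⟨by positivity, pow_le_one₀ (by norm_num) (by norm_num)⟩
  have hbound : ∀ n : ℕ, 2 ^ n * (g (u + t n) - g u) ≤ g (u + h) - g u := by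
    intro n
    induction n with
    | zero => simp [t]
    | succ n ih =>
      have hmid := hg u hu _ (hts n)
      rw [show (u + (u + t n)) / 2 = u + t (n + 1) by simp only [t]; ring] at hmid
      calc 2 ^ (n + 1) * (g (u + t (n + 1)) - g u)
          ≤ 2 ^ n * (g (u + t n) - g u) := by
            rw [pow_succ]; nlinarith [pow_pos (two_pos : (0 : ℝ) < 2) n]
        _ ≤ g (u + h) - g u := ih
  have ht0 : Tendsto t atTop (𝓝[≠] 0) := by
    refine tendsto_nhdsWithin_of_tendsto_nhds_of_eventually_within _ ?_
      (Eventually.of_forall fun n => by simp [t, hh])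
    simpa using (tendsto_pow_atTop_nhds_zero_of_lt_one (by norm_num) (by norm_num)).mul_const h
  have hlim : Tendsto (fun n => 2 ^ n * (g (u + t n) - g u)) atTop (𝓝 (h * deriv g u)) := by
    refine (((hasDerivAt_iff_tendsto_slope_zero.1 hgu.hasDerivAt).comp ht0).const_mul h).congr
      fun n => ?_
    simp only [Function.comp, t, smul_eq_mul, mul_inv, inv_pow, inv_inv]
    field_simp
  rw [mul_comm]
  exact le_of_tendsto' hlim hbound

theorem monotoneOn_deriv (hg : MidpointConvexOn s g) (hs : Convex ℝ s)
    (hgd : ∀ u ∈ s, DifferentiableAt ℝ g u) : MonotoneOn (deriv g) s := by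
  intro u hu v hv huv
  have h₁ := hg.deriv_mul_le hs hu (by rwa [add_sub_cancel]) (hgd u hu) (h := v - u)
  have h₂ := hg.deriv_mul_le hs hv (by rwa [add_sub_cancel]) (hgd v hv) (h := u - v)
  rw [add_sub_cancel] at h₁ h₂
  rcases huv.eq_or_lt with rfl | hlt
  · exact le_rfl
  · nlinarith

end MidpointConvexOn

theorem ConvexOn.midpointConvexOn {s : Set ℝ} {g : ℝ → ℝ} (hg : ConvexOn ℝ s g) :
    MidpointConvexOn s g := fun u hu v hv => by
  have h := hg.2 hu hv (by norm_num : (0 : ℝ) ≤ 1 / 2) (by norm_num : (0 : ℝ) ≤ 1 / 2)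
    (by norm_num)
  simp only [smul_eq_mul] at h
  calc g ((u + v) / 2) = g (1 / 2 * u + 1 / 2 * v) := by congr 1; ring
    _ ≤ 1 / 2 * g u + 1 / 2 * g v := h
    _ = (g u + g v) / 2 := by ring

theorem midpointConvexOn_iff_monotoneOn_deriv {s : Set ℝ} {g : ℝ → ℝ} (hs : Convex ℝ s)
    (hgd : ∀ u ∈ s, DifferentiableAt ℝ g u) :
    MidpointConvexOn s g ↔ MonotoneOn (deriv g) s := by
  refine ⟨fun hg => hg.monotoneOn_deriv hs hgd, fun hmono => ConvexOn.midpointConvexOn ?_⟩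
  exact (hmono.mono interior_subset).convexOn_of_deriv hs
    (fun u hu => (hgd u hu).continuousAt.continuousWithinAt)
    (fun u hu => (hgd u (interior_subset hu)).differentiableWithinAt)

theorem Set.OrdConnected.inv_of_subset_Ioi {I : Set ℝ} (hI : I.OrdConnected)
    (hpos : I ⊆ Ioi 0) : I⁻¹.OrdConnected :=
  ⟨fun u hu v hv w ⟨huw, hwv⟩ => by
    rw [mem_inv] at hu hv ⊢
    have hu0 : 0 < u := inv_pos.1 (hpos hu)
    exact hI.out hv hu ⟨inv_anti₀ (hu0.trans_le huw) hwv, inv_anti₀ hu0 huw⟩⟩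

theorem inv_mean_inv_eq_harmonicMean {x y : ℝ} (hx : x ≠ 0) (hy : y ≠ 0) :
    ((x⁻¹ + y⁻¹) / 2)⁻¹ = 2 * x * y / (x + y) := by
  rw [show (x⁻¹ + y⁻¹) / 2 = (x + y) / (2 * x * y) by field_simp; ring, inv_div]

theorem le_harmonicMean_iff_neg_inv_le {p q F : ℝ} (hp : 0 < p) (hq : 0 < q) (hF : 0 < F) :
    F ≤ 2 * (p * q) / (p + q) ↔ -F⁻¹ ≤ (-p⁻¹ + -q⁻¹) / 2 := by
  rw [← mul_assoc, ← inv_mean_inv_eq_harmonicMean hp.ne' hq.ne', le_inv_comm₀ hF (by positivity)]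
  constructor <;> intro h <;> linarith

section Inversion

variable {I : Set ℝ} {f : ℝ → ℝ}

theorem hhConvexOn_iff_midpointConvexOn (hI : I.OrdConnected) (hpos : I ⊆ Ioi 0)
    (hf : ∀ x ∈ I, 0 < f x) :
    HHConvexOn I f ↔ MidpointConvexOn I⁻¹ (fun u => -(f u⁻¹)⁻¹) := by
  have hmid : ∀ x ∈ I, ∀ y ∈ I, ((x⁻¹ + y⁻¹) / 2)⁻¹ ∈ I := fun x hx y hy => by
    have h := (hI.inv_of_subset_Ioi hpos).convex (x := x⁻¹) (y := y⁻¹) (by simpa) (by simpa)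
      (by norm_num : (0 : ℝ) ≤ 1 / 2) (by norm_num : (0 : ℝ) ≤ 1 / 2) (by norm_num)
    rw [← Set.mem_inv]
    convert h using 1
    rw [smul_eq_mul, smul_eq_mul]
    ring
  have key : ∀ x ∈ I, ∀ y ∈ I, f (2 * x * y / (x + y)) ≤ 2 * (f x * f y) / (f x + f y) ↔
      -(f ((x⁻¹ + y⁻¹) / 2)⁻¹)⁻¹ ≤ (-(f x⁻¹⁻¹)⁻¹ + -(f y⁻¹⁻¹)⁻¹) / 2 := by
    intro x hx y hy
    have hxy := hmid x hx y hy
    rw [inv_mean_inv_eq_harmonicMean (hpos hx).ne' (hpos hy).ne'] at hxy ⊢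
    rw [inv_inv, inv_inv]
    exact le_harmonicMean_iff_neg_inv_le (hf x hx) (hf y hy) (hf _ hxy)
  constructor
  · intro h u hu v hv
    simpa only [inv_inv] using (key _ hu _ hv).1 (h _ hu _ hv)
  · intro h x hx y hy
    exact (key x hx y hy).2 (h x⁻¹ (by simpa) y⁻¹ (by simpa))

theorem hasDerivAt_neg_inv_comp_inv {u : ℝ} (hu : u ≠ 0) (hf : DifferentiableAt ℝ f u⁻¹)
    (hfu : f u⁻¹ ≠ 0) :
    HasDerivAt (fun u => -(f u⁻¹)⁻¹) (-(u⁻¹ ^ 2 * deriv f u⁻¹ / f u⁻¹ ^ 2)) u := by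
  have h := ((hf.hasDerivAt.comp u (hasDerivAt_inv hu)).inv hfu).neg
  refine h.congr_deriv ?_
  simp only [Function.comp, inv_pow]
  ring

theorem monotoneOn_iff_monotoneOn_neg_comp_inv (hpos : I ⊆ Ioi 0) {φ : ℝ → ℝ} :
    MonotoneOn φ I ↔ MonotoneOn (fun u => -φ u⁻¹) I⁻¹ := by
  constructor
  · intro h u hu v hv huv
    exact neg_le_neg (h hv hu (inv_anti₀ (inv_pos.1 (hpos hu)) huv))
  · intro h x hx y hy hxy
    have := h (b := x⁻¹) (by simpa) (by simpa) (inv_anti₀ (hpos hx) hxy)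
    simpa only [inv_inv, neg_le_neg_iff] using this

theorem hhConvexOn_iff_monotoneOn (hI : I.OrdConnected) (hpos : I ⊆ Ioi 0)
    (hfd : ∀ x ∈ I, DifferentiableAt ℝ f x) (hf : ∀ x ∈ I, 0 < f x) :
    HHConvexOn I f ↔ MonotoneOn (fun x => x ^ 2 * deriv f x / f x ^ 2) I := by
  have hg : ∀ u ∈ I⁻¹, HasDerivAt (fun u => -(f u⁻¹)⁻¹)
      (-(u⁻¹ ^ 2 * deriv f u⁻¹ / f u⁻¹ ^ 2)) u := fun u hu =>
    hasDerivAt_neg_inv_comp_inv (inv_pos.1 (hpos hu)).ne' (hfd _ hu) (hf _ hu).ne'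
  rw [hhConvexOn_iff_midpointConvexOn hI hpos hf,
    midpointConvexOn_iff_monotoneOn_deriv (hI.inv_of_subset_Ioi hpos).convex
      (fun u hu => (hg u hu).differentiableAt),
    monotoneOn_iff_monotoneOn_neg_comp_inv hpos]
  have heq : EqOn (deriv fun u => -(f u⁻¹)⁻¹) (fun u => -(u⁻¹ ^ 2 * deriv f u⁻¹ / f u⁻¹ ^ 2))
      I⁻¹ := fun u hu => (hg u hu).deriv
  exact ⟨fun h => h.congr heq, fun h => h.congr heq.symm⟩

end Inversion

theorem stmt18 (a b : ℝ) (ha : 0 ≤ a) (f : ℝ → ℝ)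
    (hdiff : ∀ x ∈ Set.Ioo a b, DifferentiableAt ℝ f x)
    (hpos : ∀ x ∈ Set.Ioo a b, 0 < f x) :
    (∀ x ∈ Set.Ioo a b, ∀ y ∈ Set.Ioo a b,
        f (2 * x * y / (x + y)) ≤ 2 * (f x * f y) / (f x + f y)) ↔
      MonotoneOn (fun x => x ^ 2 * deriv f x / f x ^ 2) (Set.Ioo a b) :=
  hhConvexOn_iff_monotoneOn ordConnected_Ioo (fun _ hx => ha.trans_lt hx.1) hdiff hpos
end
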